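/- arXiv:1702.04795 — 7 statements merged into one kernel-verified Lean document; each statement's English description precedes it below -/
import Mathlib

section
/- Let R=(r_n) be a strictly increasing sequence of natural numbers such that r_{n+1}/r_n → ∞. Then for every operator f on R (given by integers a_0,…,a_d with a_d ≠ 0 and d ≥ 1), the set {n ∈ ℕ : f(n) = 0} is finite. -/
/-!
Once `r (n + 1) > C * r n` for all large `n`, with `C = |a 0| + ⋯ + |a (d - 1)| + 1`, each of
`r n, …, r (n + d - 1)` is less than `r (n + d) / C`, so the lower-order part of the operator is
smaller in absolute value than `r (n + d) ≤ |a d * r (n + d)|` and cannot cancel the leading term.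
-/

open Filter Finset

lemma eventually_pos_and_mul_lt_of_tendsto_ratio {u : ℕ → ℝ} (hu : ∀ n, 0 ≤ u n)
    (hratio : Tendsto (fun n => u (n + 1) / u n) atTop atTop) (C : ℝ) :
    ∀ᶠ n in atTop, 0 < u n ∧ C * u n < u (n + 1) := by
  filter_upwards [hratio.eventually_gt_atTop (max C 0)] with n hn
  -- `u n = 0` would make the ratio the junk value `0`.
  have hpos : 0 < u n := (hu n).lt_of_ne fun h => by simp [← h] at hn
  refine ⟨hpos, ?_⟩
  calc C * u n ≤ max C 0 * u n := by gcongr; exact le_max_left C 0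
    _ < u (n + 1) := (lt_div_iff₀ hpos).1 hn

lemma mul_lt_of_forall_mul_lt_succ {u : ℕ → ℝ} {C : ℝ} {N : ℕ} (hC : 1 ≤ C)
    (h : ∀ n ≥ N, 0 < u n ∧ C * u n < u (n + 1)) {m k : ℕ} (hm : N ≤ m) (hmk : m < k) :
    C * u m < u k := by
  induction k, hmk using Nat.le_induction with
  | base => exact (h m hm).2
  | succ k hmk ih =>
    obtain ⟨hk, hk'⟩ := h k (by omega)
    calc C * u m < u k := ih
      _ ≤ C * u k := le_mul_of_one_le_left hk.le hC
      _ < u (k + 1) := hk'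

lemma abs_sum_mul_lt_of_mul_abs_le {a v : ℕ → ℝ} {d : ℕ} {x : ℝ} (hx : 0 < x)
    (hv : ∀ i < d, (∑ j ∈ range d, |a j| + 1) * |v i| ≤ x) :
    |∑ i ∈ range d, a i * v i| < x := by
  set C := ∑ j ∈ range d, |a j| + 1
  have hC : 0 < C := by positivity
  refine lt_of_mul_lt_mul_left ?_ hC.le
  calc C * |∑ i ∈ range d, a i * v i| ≤ C * ∑ i ∈ range d, |a i| * |v i| := by
        gcongr
        exact (abs_sum_le_sum_abs _ _).trans_eq (by simp only [abs_mul])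
    _ = ∑ i ∈ range d, |a i| * (C * |v i|) := by rw [mul_sum]; ring_nf
    _ ≤ ∑ i ∈ range d, |a i| * x :=
        sum_le_sum fun i hi => by gcongr; exact hv i (mem_range.1 hi)
    _ < C * x := by rw [← sum_mul]; linarith

lemma sum_range_succ_mul_ne_zero_of_dominant {a v : ℕ → ℝ} {d : ℕ} (had : 1 ≤ |a d|)
    (hpos : 0 < v d) (hv : ∀ i < d, (∑ j ∈ range d, |a j| + 1) * |v i| ≤ v d) :
    ∑ i ∈ range (d + 1), a i * v i ≠ 0 := by
  intro hzero
  have hlead : a d * v d = -∑ i ∈ range d, a i * v i := by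
    rw [sum_range_succ] at hzero; linarith
  have hlower := abs_sum_mul_lt_of_mul_abs_le hpos hv
  rw [← abs_neg, ← hlead, abs_mul, abs_of_pos hpos] at hlower
  nlinarith

theorem operator_zeros_finite_of_ratio_tendsto_atTop_general
    (r : ℕ → ℕ)
    (hratio : Tendsto (fun n => (r (n + 1) : ℝ) / r n) atTop atTop)
    (d : ℕ) (a : ℕ → ℤ) (had : a d ≠ 0) :
    {n : ℕ | (∑ i ∈ Finset.range (d + 1), a i * (r (n + i) : ℤ)) = 0}.Finite := by
  set C : ℝ := ∑ j ∈ range d, |(a j : ℝ)| + 1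
  have hC : 1 ≤ C := le_add_of_nonneg_left (sum_nonneg fun j _ => abs_nonneg _)
  obtain ⟨N, hN⟩ := (eventually_pos_and_mul_lt_of_tendsto_ratio (fun n => Nat.cast_nonneg (r n))
    hratio C).exists_forall_of_atTop
  refine (Set.finite_lt_nat N).subset fun n hn => ?_
  show n < N
  by_contra! hNn
  refine sum_range_succ_mul_ne_zero_of_dominant (a := fun i => (a i : ℝ))
    (v := fun i => (r (n + i) : ℝ)) (by exact_mod_cast Int.one_le_abs had)
    (hN (n + d) (by omega)).1 (fun i hi => ?_) ?_
  · rw [abs_of_nonneg (Nat.cast_nonneg _)]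
    exact (mul_lt_of_forall_mul_lt_succ hC hN (by omega) (by omega)).le
  · exact_mod_cast hn

/-- If `r` is a strictly increasing sequence of naturals with
`r (n+1) / r n → ∞`, then every operator `f(n) = a₀ r n + ⋯ + a_d r (n+d)`
(with `d ≥ 1` and `a_d ≠ 0`) has finitely many zeros. -/
theorem operator_zeros_finite_of_ratio_tendsto_atTop
    (r : ℕ → ℕ) (hmono : StrictMono r)
    (hratio : Tendsto (fun n => (r (n + 1) : ℝ) / r n) atTop atTop)
    (d : ℕ) (hd : 1 ≤ d) (a : ℕ → ℤ) (had : a d ≠ 0) :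
    {n : ℕ | (∑ i ∈ Finset.range (d + 1), a i * (r (n + i) : ℤ)) = 0}.Finite :=
  operator_zeros_finite_of_ratio_tendsto_atTop_general r hratio d a had
end

section
/- Let R=(r_n) be a strictly increasing sequence of natural numbers such that r_{n+1}/r_n converges to a real number θ. Let a_0,…,a_d ∈ ℤ be such that Σ_{i=0}^d a_i θ^i ≠ 0. Then there exists k ∈ ℕ such that for all n ≥ k one has a_0 r_n + a_1 r_{n+1} + ⋯ + a_d r_{n+d} ≠ 0. -/
/-!
Telescoping gives `r (n + i) / r n → θ ^ i`, so `(∑ aᵢ r (n + i)) / r n → ∑ aᵢ θ ^ i ≠ 0`;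
hence the sum itself is eventually nonzero.
-/

open Filter Topology

section RatioLimit

variable {K : Type*} [Field K] [TopologicalSpace K] {u : ℕ → K} {θ : K}

theorem tendsto_shift_div_of_tendsto_succ_div [ContinuousMul K]
    (hu : ∀ᶠ n in atTop, u n ≠ 0) (h : Tendsto (fun n => u (n + 1) / u n) atTop (𝓝 θ))
    (i : ℕ) : Tendsto (fun n => u (n + i) / u n) atTop (𝓝 (θ ^ i)) := by
  induction i with
  | zero =>
    refine tendsto_const_nhds.congr' ?_
    filter_upwards [hu] with n hn
    simp [hn]
  | succ i ih =>
    have hstep : Tendsto (fun n => u (n + i + 1) / u (n + i)) atTop (𝓝 θ) :=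
      h.comp (tendsto_add_atTop_nat i)
    refine (pow_succ' θ i ▸ hstep.mul ih).congr' ?_
    filter_upwards [(tendsto_add_atTop_nat i).eventually hu] with n hn
    rw [← add_assoc, div_mul_div_cancel₀ hn]

theorem eventually_sum_mul_shift_ne_zero [IsTopologicalRing K] [T1Space K]
    (hu : ∀ᶠ n in atTop, u n ≠ 0) (h : Tendsto (fun n => u (n + 1) / u n) atTop (𝓝 θ))
    (s : Finset ℕ) (c : ℕ → K) (hθ : ∑ i ∈ s, c i * θ ^ i ≠ 0) :
    ∀ᶠ n in atTop, ∑ i ∈ s, c i * u (n + i) ≠ 0 := by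
  have hlim : Tendsto (fun n => ∑ i ∈ s, c i * (u (n + i) / u n)) atTop
      (𝓝 (∑ i ∈ s, c i * θ ^ i)) :=
    tendsto_finsetSum s fun i _ =>
      (tendsto_shift_div_of_tendsto_succ_div hu h i).const_mul (c i)
  filter_upwards [hlim.eventually_ne hθ, hu] with n hne hn hzero
  refine hne ?_
  simp only [mul_div_assoc', ← Finset.sum_div, hzero, zero_div]

end RatioLimit

/-- If `r (n+1) / r n → θ` and `∑ aᵢ θ^i ≠ 0`, then
`a₀ r n + ⋯ + a_d r (n+d) ≠ 0` for all sufficiently large `n`. -/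
theorem operator_eventually_nonzero_of_eval_ne_zero
    (r : ℕ → ℕ) (hmono : StrictMono r) (θ : ℝ)
    (hratio : Tendsto (fun n => (r (n + 1) : ℝ) / r n) atTop (nhds θ))
    (d : ℕ) (a : ℕ → ℤ)
    (ha : (∑ i ∈ Finset.range (d + 1), (a i : ℝ) * θ ^ i) ≠ 0) :
    ∃ k : ℕ, ∀ n ≥ k, (∑ i ∈ Finset.range (d + 1), a i * (r (n + i) : ℤ)) ≠ 0 := by
  have hpos : ∀ᶠ n in atTop, (r n : ℝ) ≠ 0 := by
    filter_upwards [eventually_ge_atTop 1] with n hn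
    exact Nat.cast_ne_zero.mpr (Nat.one_le_iff_ne_zero.mp (hn.trans (hmono.id_le n)))
  obtain ⟨k, hk⟩ := eventually_atTop.mp
    (eventually_sum_mul_shift_ne_zero hpos hratio _ (fun i => (a i : ℝ)) ha)
  refine ⟨k, fun n hn hzero => hk n hn ?_⟩
  exact_mod_cast congrArg (Int.cast : ℤ → ℝ) hzero
end

section
/- Let R=(r_n) be a strictly increasing sequence of natural numbers such that r_{n+1}/r_n converges to a real number θ > 1, and suppose R satisfies a linear recurrence relation over ℤ whose characteristic polynomial is the minimal polynomial of θ. Then for every operator f(n) = a_0 r_n + ⋯ + a_d r_{n+d} on R, the set {n ∈ ℕ : f(n) = 0} is either finite or cofinite in ℕ; moreover this set is infinite if and only if a_0 + a_1 θ + ⋯ + a_d θ^d = 0. -/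
/-! If `∑ aᵢ θ^i = 0`, the minimal polynomial of `θ` divides `∑ aᵢ X^i`. The characteristic
polynomial, evaluated at the shift operator, annihilates `r`, hence so does every multiple of it,
and `f` vanishes identically. Otherwise `f(n) / r n → ∑ aᵢ θ^i ≠ 0`, so `f(n) ≠ 0` for all large
`n`. -/

open Filter

/-- `r` satisfies a linear recurrence relation over `ℤ` whose characteristic
polynomial `X^k - ∑_{i<k} cᵢ X^i` is the minimal polynomial of `θ` over `ℚ`. -/
def SatisfiesRecurrenceMinpoly (r : ℕ → ℕ) (θ : ℝ) : Prop :=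
  ∃ k : ℕ, 0 < k ∧ ∃ c : ℕ → ℤ,
    (∀ n : ℕ, (r (n + k) : ℤ) = ∑ i ∈ Finset.range k, c i * r (n + i)) ∧
    (Polynomial.X ^ k - ∑ i ∈ Finset.range k, Polynomial.C (c i : ℚ) * Polynomial.X ^ i)
      = minpoly ℚ θ

open Polynomial Finset Topology

section SeqShift

variable {R : Type*} [CommSemiring R]

def seqShift : Module.End R (ℕ → R) where
  toFun s n := s (n + 1)
  map_add' _ _ := rfl
  map_smul' _ _ := rfl

lemma seqShift_pow_apply (i : ℕ) (s : ℕ → R) (n : ℕ) : (seqShift ^ i) s n = s (n + i) := by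
  induction i generalizing s with
  | zero => rfl
  | succ i ih =>
    rw [pow_succ, Module.End.mul_apply, ih]
    rfl

lemma aeval_seqShift_sum_apply (m : ℕ) (b : ℕ → R) (s : ℕ → R) (n : ℕ) :
    aeval seqShift (∑ i ∈ range m, C (b i) * X ^ i) s n = ∑ i ∈ range m, b i * s (n + i) := by
  simp [map_sum, LinearMap.coe_sum, Finset.sum_apply, Module.algebraMap_end_apply,
    seqShift_pow_apply]

lemma aeval_seqShift_eq_zero_of_recurrence {S : Type*} [CommRing S] {k : ℕ} {c s : ℕ → S}
    (h : ∀ n, s (n + k) = ∑ i ∈ range k, c i * s (n + i)) :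
    aeval seqShift (X ^ k - ∑ i ∈ range k, C (c i) * X ^ i) s = 0 := by
  funext n
  rw [map_sub, LinearMap.sub_apply, Pi.sub_apply, aeval_seqShift_sum_apply, aeval_X_pow,
    seqShift_pow_apply, h, sub_self, Pi.zero_apply]

lemma aeval_seqShift_eq_zero_of_dvd {p q : R[X]} {s : ℕ → R} (hpq : p ∣ q)
    (hs : aeval seqShift p s = 0) : aeval seqShift q s = 0 := by
  obtain ⟨q, rfl⟩ := hpq
  rw [mul_comm, map_mul, Module.End.mul_apply, hs, map_zero]

end SeqShift

section RatioLimit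

variable {r : ℕ → ℝ} {θ : ℝ}

lemma tendsto_div_add_of_tendsto_succ_div (hr : ∀ᶠ n in atTop, r n ≠ 0)
    (hratio : Tendsto (fun n => r (n + 1) / r n) atTop (𝓝 θ)) (i : ℕ) :
    Tendsto (fun n => r (n + i) / r n) atTop (𝓝 (θ ^ i)) := by
  induction i with
  | zero =>
    refine tendsto_const_nhds.congr' ?_
    filter_upwards [hr] with n hn
    rw [add_zero, div_self hn, pow_zero]
  | succ i ih =>
    have hshift : Tendsto (fun n => r (n + i + 1) / r (n + i)) atTop (𝓝 θ) :=
      hratio.comp (tendsto_add_atTop_nat i)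
    rw [pow_succ']
    refine (hshift.mul ih).congr' ?_
    filter_upwards [tendsto_add_atTop_nat i |>.eventually hr] with n hn
    rw [div_mul_div_cancel₀ hn, add_assoc]

lemma tendsto_sum_mul_div (hr : ∀ᶠ n in atTop, r n ≠ 0)
    (hratio : Tendsto (fun n => r (n + 1) / r n) atTop (𝓝 θ)) (s : Finset ℕ) (a : ℕ → ℝ) :
    Tendsto (fun n => (∑ i ∈ s, a i * r (n + i)) / r n) atTop (𝓝 (∑ i ∈ s, a i * θ ^ i)) := by
  simp_rw [Finset.sum_div, mul_div_assoc]
  exact tendsto_finsetSum _ fun i _ =>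
    (tendsto_div_add_of_tendsto_succ_div hr hratio i).const_mul _

lemma finite_setOf_sum_mul_eq_zero (hr : ∀ᶠ n in atTop, r n ≠ 0)
    (hratio : Tendsto (fun n => r (n + 1) / r n) atTop (𝓝 θ)) (s : Finset ℕ) (a : ℕ → ℝ)
    (ha : ∑ i ∈ s, a i * θ ^ i ≠ 0) :
    {n | ∑ i ∈ s, a i * r (n + i) = 0}.Finite := by
  have hne : ∀ᶠ n in cofinite, ∑ i ∈ s, a i * r (n + i) ≠ 0 := by
    rw [Nat.cofinite_eq_atTop]
    filter_upwards [(tendsto_sum_mul_div hr hratio s a).eventually_ne ha] with n hn h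
    exact hn (by rw [h, zero_div])
  simpa using eventually_cofinite.1 hne

end RatioLimit

theorem SatisfiesRecurrenceMinpoly.sum_mul_eq_zero {r : ℕ → ℕ} {θ : ℝ}
    (hrec : SatisfiesRecurrenceMinpoly r θ) {m : ℕ} {a : ℕ → ℤ}
    (ha : ∑ i ∈ range m, (a i : ℝ) * θ ^ i = 0) (n : ℕ) :
    ∑ i ∈ range m, a i * (r (n + i) : ℤ) = 0 := by
  obtain ⟨k, -, c, hc, hminpoly⟩ := hrec
  have hcharPoly : aeval seqShift (minpoly ℚ θ) (fun n => (r n : ℚ)) = 0 := by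
    rw [← hminpoly]
    exact aeval_seqShift_eq_zero_of_recurrence fun n => by exact_mod_cast hc n
  have hdvd : minpoly ℚ θ ∣ ∑ i ∈ range m, C (a i : ℚ) * X ^ i :=
    minpoly.dvd ℚ θ (by simpa using ha)
  have := congrFun (aeval_seqShift_eq_zero_of_dvd hdvd hcharPoly) n
  rw [aeval_seqShift_sum_apply, Pi.zero_apply] at this
  exact_mod_cast this

theorem operator_zeros_finite_or_cofinite_of_recurrence_general
    (r : ℕ → ℕ) (hmono : StrictMono r) (θ : ℝ)
    (hratio : Tendsto (fun n => (r (n + 1) : ℝ) / r n) atTop (nhds θ))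
    (hrec : SatisfiesRecurrenceMinpoly r θ)
    (d : ℕ) (a : ℕ → ℤ) :
    ({n : ℕ | (∑ i ∈ Finset.range (d + 1), a i * (r (n + i) : ℤ)) = 0}.Finite ∨
      {n : ℕ | (∑ i ∈ Finset.range (d + 1), a i * (r (n + i) : ℤ)) ≠ 0}.Finite) ∧
    ({n : ℕ | (∑ i ∈ Finset.range (d + 1), a i * (r (n + i) : ℤ)) = 0}.Infinite ↔
      (∑ i ∈ Finset.range (d + 1), (a i : ℝ) * θ ^ i) = 0) := by
  by_cases hroot : ∑ i ∈ range (d + 1), (a i : ℝ) * θ ^ i = 0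
  · simp [hroot, hrec.sum_mul_eq_zero hroot, Set.infinite_univ]
  · have hr : ∀ᶠ n in atTop, (r n : ℝ) ≠ 0 := by
      filter_upwards [eventually_ge_atTop 1] with n hn
      exact Nat.cast_ne_zero.2 (Nat.one_le_iff_ne_zero.1 (hn.trans hmono.le_apply))
    have hfin : {n | ∑ i ∈ range (d + 1), a i * (r (n + i) : ℤ) = 0}.Finite := by
      refine (finite_setOf_sum_mul_eq_zero hr hratio _ _ hroot).subset fun n hn => ?_
      exact_mod_cast hn
    exact ⟨Or.inl hfin, iff_of_false (not_not.2 hfin) hroot⟩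

/-- if `r (n+1) / r n → θ > 1` and `r` satisfies a linear recurrence
whose characteristic polynomial is the minimal polynomial of `θ`, then for every
operator `f(n) = a₀ r n + ⋯ + a_d r (n+d)`, the zero set of `f` is finite or
cofinite, and it is infinite iff `a₀ + a₁ θ + ⋯ + a_d θ^d = 0`. -/
theorem operator_zeros_finite_or_cofinite_of_recurrence
    (r : ℕ → ℕ) (hmono : StrictMono r) (θ : ℝ) (hθ : 1 < θ)
    (hratio : Tendsto (fun n => (r (n + 1) : ℝ) / r n) atTop (nhds θ))
    (hrec : SatisfiesRecurrenceMinpoly r θ)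
    (d : ℕ) (a : ℕ → ℤ) (had : a d ≠ 0) :
    ({n : ℕ | (∑ i ∈ Finset.range (d + 1), a i * (r (n + i) : ℤ)) = 0}.Finite ∨
      {n : ℕ | (∑ i ∈ Finset.range (d + 1), a i * (r (n + i) : ℤ)) ≠ 0}.Finite) ∧
    ({n : ℕ | (∑ i ∈ Finset.range (d + 1), a i * (r (n + i) : ℤ)) = 0}.Infinite ↔
      (∑ i ∈ Finset.range (d + 1), (a i : ℝ) * θ ^ i) = 0) :=
  operator_zeros_finite_or_cofinite_of_recurrence_general r hmono θ hratio hrec d a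
end

section
/- Let R=(r_n) be a regular sequence, let f_1,…,f_s be operators on R, and let z ∈ ℤ. Then there exist finitely many tuples m̄_1,…,m̄_k ∈ ℤ^s such that for every non-degenerate solution (l_1,…,l_s) ∈ ℕ^s of the equation f_1(x_1)+⋯+f_s(x_s)=z, there is some i ∈ {1,…,k} with l_j = l_1 + m_{ij} for all j ∈ {1,…,s}. -/
open Filter

/-- A strictly increasing sequence `r` of naturals is regular if the ratios
`r (n+1) / r n` tend to `∞` or converge to some real `θ > 1` which, if
algebraic, is such that `r` satisfies a linear recurrence whose characteristic
polynomial is the minimal polynomial of `θ`. -/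
def IsRegularSequence (r : ℕ → ℕ) : Prop :=
  StrictMono r ∧
    (Tendsto (fun n => (r (n + 1) : ℝ) / r n) atTop atTop ∨
      ∃ θ : ℝ, 1 < θ ∧ Tendsto (fun n => (r (n + 1) : ℝ) / r n) atTop (nhds θ) ∧
        (IsAlgebraic ℚ θ → SatisfiesRecurrenceMinpoly r θ))

/-- `l` is a non-degenerate solution of `f₁(x₁) + ⋯ + f_s(x_s) = z`:
the coordinates are pairwise distinct and every proper nonempty subsum of the
`fᵢ(lᵢ)` is nonzero. -/
def IsNondegenerateSolution {s : ℕ} (f : Fin s → ℕ → ℤ) (z : ℤ) (l : Fin s → ℕ) : Prop :=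
  (∑ j, f j (l j)) = z ∧
  (∀ i j, i ≠ j → l i ≠ l j) ∧
  ∀ I : Finset (Fin s), I.Nonempty → I ≠ Finset.univ → (∑ i ∈ I, f i (l i)) ≠ 0

/-!
An operator is `P(S)` applied to `r`, where `P ∈ ℤ[X]` and `S` is the shift of sequences. The key
dichotomy: `P(S) r` either vanishes identically or is eventually at least `ε r_n` in absolute
value. If `r_{n+1}/r_n → ∞` the leading term dominates. If `r_{n+1}/r_n → θ`, then
`(P(S) r)_n / r_n → P(θ)`; when `P(θ) = 0`, the minimal polynomial of `θ`, which annihilates `r`,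
divides `P`. As `r` grows exponentially, a nonzero value with `|(P(S) r)_n| ≤ C r_u` forces
`n ≤ u + M`.

Given a non-degenerate solution `l` and an index `i`, let `I` be the indices `j` with `l_j > l_i`.
If the `l_j`, `j ∈ I`, lie within `G` of each other, then `∑_{j∈I} f_j(l_j)` is one of finitely
many operators `∑_{j∈I} X^{e_j} A_j` evaluated at `min_I l`. It is nonzero by non-degeneracy and
equals `z - ∑_{j∉I} f_j(l_j) = O(r_{l_i + K})`, so `min_I l - l_i` is bounded. Induction on `|I|`
bounds every difference `l_j - l_i`, leaving finitely many possible offset tuples.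
-/

open Polynomial Finset Topology

theorem eventually_le_abs_of_tendsto_div {α : Type*} {l : Filter α} {x y : α → ℝ} {c : ℝ}
    (hc : c ≠ 0) (hy : ∀ᶠ a in l, 0 < y a) (h : Tendsto (fun a => x a / y a) l (𝓝 c)) :
    ∀ᶠ a in l, |c| / 2 * y a ≤ |x a| := by
  filter_upwards [hy, h.abs.eventually (eventually_ge_nhds (half_lt_self (abs_pos.2 hc)))]
    with a hya ha
  rwa [abs_div, abs_of_pos hya, le_div_iff₀ hya] at ha

theorem le_add_of_gap_step {ι : Type*} [Fintype ι] {Q : (ι → ℕ) → Prop} {g : ℕ → ℕ}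
    (hg : ∀ G, ∀ l, Q l → ∀ i, (∀ k, l i < l k → ∀ j, l j ≤ l k + G) → ∀ j, l j ≤ l i + g G) :
    ∀ l, Q l → ∀ i j, l j ≤ l i + g^[Fintype.card ι] 0 := by
  have key : ∀ t l, Q l → ∀ i, #{k | l i < l k} < t → ∀ j, l j ≤ l i + g^[t] 0 := by
    intro t
    induction t with
    | zero => simp
    | succ t ih =>
      intro l hl i hi j
      rw [Function.iterate_succ_apply']
      refine hg _ l hl i (fun k hk => ih l hl k ?_) j
      have hsub : ({k' | l k < l k'} : Finset ι) ⊆ ({k' | l i < l k'} : Finset ι) :=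
        fun k' hk' => by
        simp only [mem_filter, mem_univ, true_and] at hk' ⊢
        exact hk.trans hk'
      have := card_lt_card ((ssubset_iff_of_subset hsub).2 ⟨k, by simpa using hk, by simp⟩)
      omega
  intro l hl i
  exact key _ l hl i (card_lt_univ_of_notMem (x := i) (by simp))

theorem exists_offsets_of_forall_le_add {ι : Type*} [Finite ι] {Q : (ι → ℕ) → Prop} (i₀ : ι)
    {G : ℕ} (hQ : ∀ l, Q l → ∀ i j, l j ≤ l i + G) :
    ∃ k, ∃ m : Fin k → ι → ℤ, ∀ l, Q l → ∃ i, ∀ j, (l j : ℤ) = l i₀ + m i j := by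
  have hfin : (Set.univ.pi fun _ : ι => Set.Icc (-G : ℤ) G).Finite :=
    Set.Finite.pi fun _ => Set.finite_Icc _ _
  obtain ⟨k, m, hm⟩ := hfin.fin_embedding
  refine ⟨k, m, fun l hl => ?_⟩
  have hoffset : (fun j => (l j : ℤ) - l i₀) ∈ Set.range m := by
    rw [hm]
    intro j _
    show -(G : ℤ) ≤ l j - l i₀ ∧ (l j : ℤ) - l i₀ ≤ G
    have := hQ l hl i₀ j
    have := hQ l hl j i₀
    constructor <;> omega
  obtain ⟨i, hi⟩ := hoffset
  exact ⟨i, fun j => by rw [hi]; ring⟩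

section Shift

variable (R : Type*) [CommSemiring R]

def shift : Module.End R (ℕ → R) := LinearMap.funLeft R R (· + 1)

variable {R}

theorem shift_pow_apply (m : ℕ) (x : ℕ → R) (n : ℕ) : (shift R ^ m) x n = x (n + m) := by
  induction m generalizing x n with
  | zero => rfl
  | succ m ih => rw [pow_succ, Module.End.mul_apply, ih]; rfl

theorem aeval_shift_apply (P : R[X]) (x : ℕ → R) (n : ℕ) :
    aeval (shift R) P x n = ∑ i ∈ range (P.natDegree + 1), P.coeff i * x (n + i) := by
  simp [aeval_eq_sum_range, LinearMap.sum_apply, Finset.sum_apply, shift_pow_apply]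

theorem aeval_shift_X_pow_mul_apply (m : ℕ) (P : R[X]) (x : ℕ → R) (n : ℕ) :
    aeval (shift R) (X ^ m * P) x n = aeval (shift R) P x (n + m) := by
  rw [map_mul, Module.End.mul_apply, aeval_X_pow, shift_pow_apply]

theorem exists_aeval_shift_eq (d : ℕ) (a : ℕ → R) :
    ∃ P : R[X], ∀ x, aeval (shift R) P x = fun n => ∑ i ∈ range (d + 1), a i * x (n + i) :=
  ⟨∑ i ∈ range (d + 1), monomial i (a i), fun x => by
    ext n
    simp [LinearMap.sum_apply, Finset.sum_apply, aeval_monomial, shift_pow_apply]⟩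

end Shift

section RegularSequence

variable {r : ℕ → ℕ}

theorem StrictMono.eventually_cast_pos (hr : StrictMono r) : ∀ᶠ n in atTop, (0 : ℝ) < r n :=
  eventually_atTop.2 ⟨1, fun n hn => Nat.cast_pos.2 (lt_of_lt_of_le hn (hr.id_le n))⟩

theorem StrictMono.tendsto_ratio_pow (hr : StrictMono r) {θ : ℝ}
    (hθ : Tendsto (fun n => (r (n + 1) : ℝ) / r n) atTop (𝓝 θ)) (m : ℕ) :
    Tendsto (fun n => (r (n + m) : ℝ) / r n) atTop (𝓝 (θ ^ m)) := by
  induction m with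
  | zero =>
    refine tendsto_const_nhds.congr' ?_
    filter_upwards [hr.eventually_cast_pos] with n hn
    simp [hn.ne']
  | succ m ih =>
    have hstep := (hθ.comp (tendsto_add_atTop_nat m)).mul ih
    rw [← pow_succ'] at hstep
    refine hstep.congr' ?_
    filter_upwards [(tendsto_add_atTop_nat m).eventually hr.eventually_cast_pos] with n hn
    simp only [Function.comp_apply, ← add_assoc]
    rw [div_mul_div_cancel₀ hn.ne']

theorem Monotone.tendsto_ratio_zero_of_tendsto_atTop (hr : Monotone r)
    (h : Tendsto (fun n => (r (n + 1) : ℝ) / r n) atTop atTop) {i d : ℕ} (hid : i < d) :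
    Tendsto (fun n => (r (n + i) : ℝ) / r (n + d)) atTop (𝓝 0) := by
  obtain ⟨e, rfl⟩ : ∃ e, d = e + 1 := ⟨d - 1, by omega⟩
  have hlast : Tendsto (fun n => (r (n + e) : ℝ) / r (n + e + 1)) atTop (𝓝 0) := by
    simpa [Function.comp_def, Pi.inv_def, inv_div] using
      (h.comp (tendsto_add_atTop_nat e)).inv_tendsto_atTop
  refine tendsto_of_tendsto_of_tendsto_of_le_of_le tendsto_const_nhds hlast
    (fun n => by positivity) fun n => ?_
  rw [← add_assoc]
  gcongr
  exact hr (by omega)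

theorem IsRegularSequence.exists_eventually_mul_le (hr : IsRegularSequence r) :
    ∃ ρ > (1 : ℝ), ∀ᶠ n in atTop, ρ * r n ≤ r (n + 1) := by
  obtain ⟨hmono, hinf | ⟨θ, hθ1, hθ, -⟩⟩ := hr
  · refine ⟨2, one_lt_two, ?_⟩
    filter_upwards [hinf.eventually_ge_atTop 2, hmono.eventually_cast_pos] with n hn hpos
    rwa [le_div_iff₀ hpos] at hn
  · refine ⟨(1 + θ) / 2, by linarith, ?_⟩
    filter_upwards [hθ.eventually (eventually_ge_nhds (show (1 + θ) / 2 < θ by linarith)),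
      hmono.eventually_cast_pos] with n hn hpos
    rwa [le_div_iff₀ hpos] at hn

theorem IsRegularSequence.exists_mul_lt (hr : IsRegularSequence r) (C : ℝ) :
    ∃ M, ∀ u, C * r u < r (u + M) := by
  obtain ⟨ρ, hρ, hev⟩ := hr.exists_eventually_mul_le
  obtain ⟨N, hN⟩ := eventually_atTop.1 (hev.and hr.1.eventually_cast_pos)
  have hpow : ∀ v ≥ N, ∀ m, ρ ^ m * r v ≤ r (v + m) := by
    intro v hv m
    induction m with
    | zero => simp
    | succ m ih =>
      calc ρ ^ (m + 1) * r v = ρ * (ρ ^ m * r v) := by ring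
        _ ≤ ρ * r (v + m) := by gcongr
        _ ≤ r (v + (m + 1)) := (hN (v + m) (by omega)).1
  obtain ⟨m, hm⟩ := pow_unbounded_of_one_lt (max C 0) hρ
  refine ⟨N + m, fun u => ?_⟩
  set v := max u N
  calc C * r u ≤ max C 0 * r v := by
        gcongr
        · exact le_max_left C 0
        · exact hr.1.monotone (le_max_left u N)
    _ < ρ ^ m * r v := mul_lt_mul_of_pos_right hm (hN v (le_max_right u N)).2
    _ ≤ r (v + m) := hpow v (le_max_right u N) m
    _ ≤ r (u + (N + m)) := by gcongr; exact hr.1.monotone (by omega)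

theorem StrictMono.tendsto_aeval_shift_div (hr : StrictMono r) {θ : ℝ}
    (hθ : Tendsto (fun n => (r (n + 1) : ℝ) / r n) atTop (𝓝 θ)) (P : ℤ[X]) :
    Tendsto (fun n => (aeval (shift ℤ) P (Nat.cast ∘ r) n : ℝ) / r n) atTop
      (𝓝 (aeval θ P)) := by
  simp only [aeval_shift_apply, aeval_eq_sum_range θ, Function.comp_apply, Int.cast_sum,
    Int.cast_mul, Int.cast_natCast, Finset.sum_div, mul_div_assoc, zsmul_eq_mul]
  exact tendsto_finsetSum _ fun i _ => (hr.tendsto_ratio_pow hθ i).const_mul _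

theorem StrictMono.tendsto_aeval_shift_div_of_tendsto_atTop (hr : StrictMono r)
    (h : Tendsto (fun n => (r (n + 1) : ℝ) / r n) atTop atTop) (P : ℤ[X]) :
    Tendsto (fun n => (aeval (shift ℤ) P (Nat.cast ∘ r) n : ℝ) / r (n + P.natDegree)) atTop
      (𝓝 P.leadingCoeff) := by
  have hlim : Tendsto (fun n => ∑ i ∈ range P.natDegree,
      (P.coeff i : ℝ) * ((r (n + i) : ℝ) / r (n + P.natDegree)) + P.leadingCoeff) atTop
      (𝓝 (∑ i ∈ range P.natDegree, (P.coeff i : ℝ) * 0 + P.leadingCoeff)) :=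
    (tendsto_finsetSum _ fun i hi =>
      (hr.monotone.tendsto_ratio_zero_of_tendsto_atTop h (mem_range.1 hi)).const_mul _).add_const _
  simp only [mul_zero, sum_const_zero, zero_add] at hlim
  refine hlim.congr' ?_
  filter_upwards [(tendsto_add_atTop_nat P.natDegree).eventually hr.eventually_cast_pos]
    with n hn
  simp only [aeval_shift_apply, sum_range_succ, Function.comp_apply, Int.cast_add, Int.cast_sum,
    Int.cast_mul, Int.cast_natCast, add_div, Finset.sum_div, mul_div_assoc, coeff_natDegree]
  rw [div_self hn.ne', mul_one]

theorem SatisfiesRecurrenceMinpoly.aeval_shift_eq_zero {θ : ℝ}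
    (h : SatisfiesRecurrenceMinpoly r θ) {P : ℤ[X]} (hP : aeval θ P = 0) :
    aeval (shift ℤ) P (Nat.cast ∘ r) = 0 := by
  obtain ⟨k, -, c, hrec, hchar⟩ := h
  set q : ℤ[X] := X ^ k - ∑ i ∈ range k, C (c i) * X ^ i
  have hq : q.map (algebraMap ℤ ℚ) = minpoly ℚ θ := by
    simpa [q, Polynomial.map_sum] using hchar
  have hmonic : q.Monic := by
    refine monic_X_pow_sub ((degree_sum_le _ _).trans_lt ?_)
    refine (Finset.sup_lt_iff (WithBot.bot_lt_coe k)).2 fun i hi => ?_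
    exact (degree_C_mul_X_pow_le _ _).trans_lt (WithBot.coe_lt_coe.2 (mem_range.1 hi))
  have hqr : aeval (shift ℤ) q (Nat.cast ∘ r) = 0 := by
    ext n
    simp [q, LinearMap.sum_apply, Finset.sum_apply, shift_pow_apply, hrec]
  have hqP : q ∣ P := by
    rw [← map_dvd_map (algebraMap ℤ ℚ) (RingHom.injective_int _) hmonic, hq]
    exact minpoly.dvd ℚ θ (by rwa [aeval_map_algebraMap])
  obtain ⟨Q, rfl⟩ := hqP
  rw [mul_comm, map_mul, Module.End.mul_apply, hqr, map_zero]

theorem IsRegularSequence.exists_pos_eventually_le_abs_aeval_shift (hr : IsRegularSequence r)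
    {P : ℤ[X]} (hP : aeval (shift ℤ) P (Nat.cast ∘ r) ≠ 0) :
    ∃ ε > 0, ∀ᶠ n in atTop, ε * r n ≤ |(aeval (shift ℤ) P (Nat.cast ∘ r) n : ℝ)| := by
  have hP0 : P ≠ 0 := by rintro rfl; exact hP (by simp)
  obtain ⟨hmono, hinf | ⟨θ, -, hθ, halg⟩⟩ := hr
  · have hlc : (P.leadingCoeff : ℝ) ≠ 0 := Int.cast_ne_zero.2 (leadingCoeff_ne_zero.2 hP0)
    refine ⟨|(P.leadingCoeff : ℝ)| / 2, half_pos (abs_pos.2 hlc), ?_⟩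
    filter_upwards [eventually_le_abs_of_tendsto_div hlc
      ((tendsto_add_atTop_nat P.natDegree).eventually hmono.eventually_cast_pos)
      (hmono.tendsto_aeval_shift_div_of_tendsto_atTop hinf P)] with n hn
    refine le_trans ?_ hn
    gcongr
    exact hmono.monotone (Nat.le_add_right n _)
  · by_cases hθP : aeval θ P = 0
    · have hθalg : IsAlgebraic ℚ θ :=
        ⟨P.map (algebraMap ℤ ℚ), (Polynomial.map_ne_zero_iff (RingHom.injective_int _)).2 hP0,
          by rwa [aeval_map_algebraMap]⟩
      exact absurd ((halg hθalg).aeval_shift_eq_zero hθP) hP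
    · exact ⟨_, half_pos (abs_pos.2 hθP), eventually_le_abs_of_tendsto_div hθP
        hmono.eventually_cast_pos (hmono.tendsto_aeval_shift_div hθ P)⟩

theorem IsRegularSequence.exists_le_add_of_abs_aeval_shift_le (hr : IsRegularSequence r)
    (P : ℤ[X]) (C : ℤ) :
    ∃ M, ∀ n u, aeval (shift ℤ) P (Nat.cast ∘ r) n ≠ 0 →
      |aeval (shift ℤ) P (Nat.cast ∘ r) n| ≤ C * r u → n ≤ u + M := by
  by_cases hP : aeval (shift ℤ) P (Nat.cast ∘ r) = 0
  · exact ⟨0, fun n u hn => absurd (congrFun hP n) hn⟩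
  obtain ⟨ε, hε, hev⟩ := hr.exists_pos_eventually_le_abs_aeval_shift hP
  obtain ⟨N, hN⟩ := eventually_atTop.1 hev
  obtain ⟨M, hM⟩ := hr.exists_mul_lt (C / ε)
  refine ⟨M + N, fun n u _ hle => ?_⟩
  by_contra! hlt
  have hgrow : C * r u < ε * r n := by
    calc (C : ℝ) * r u = ε * (C / ε * r u) := by field_simp
      _ < ε * r (u + M) := by gcongr; exact hM u
      _ ≤ ε * r n := by gcongr; exact hr.1.monotone (by omega)
  have hsmall : ε * r n ≤ C * r u :=
    (hN n (by omega)).trans (by exact_mod_cast hle)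
  exact hgrow.not_ge hsmall

theorem abs_aeval_shift_le (hr : Monotone r) (P : ℤ[X]) (n : ℕ) :
    |aeval (shift ℤ) P (Nat.cast ∘ r) n|
      ≤ (∑ i ∈ range (P.natDegree + 1), |P.coeff i|) * r (n + P.natDegree) := by
  rw [aeval_shift_apply, sum_mul]
  refine (abs_sum_le_sum_abs _ _).trans (sum_le_sum fun i hi => ?_)
  rw [abs_mul, Function.comp_apply, Nat.abs_cast]
  gcongr
  exact hr (by have := mem_range.1 hi; omega)

theorem exists_abs_aeval_shift_le {ι : Type*} [Finite ι] (hr : Monotone r) (P : ι → ℤ[X]) :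
    ∃ C ≥ 0, ∃ K, ∀ j n, |aeval (shift ℤ) (P j) (Nat.cast ∘ r) n| ≤ C * r (n + K) := by
  obtain ⟨C, hC⟩ :=
    Finite.bddAbove_range fun j => ∑ i ∈ range ((P j).natDegree + 1), |(P j).coeff i|
  obtain ⟨K, hK⟩ := Finite.bddAbove_range fun j => (P j).natDegree
  refine ⟨max C 0, le_max_right C 0, K, fun j n => (abs_aeval_shift_le hr (P j) n).trans ?_⟩
  gcongr
  · exact (hC ⟨j, rfl⟩).trans (le_max_left C 0)
  · exact hr (by have : (P j).natDegree ≤ K := hK ⟨j, rfl⟩; omega)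

theorem abs_sum_le_of_sum_eq {ι : Type*} [Fintype ι] {f : ι → ℕ → ℤ} {C : ℤ} {K : ℕ}
    (hr : StrictMono r) (hC : 0 ≤ C) (hf : ∀ j n, |f j n| ≤ C * r (n + K)) {z : ℤ} {l : ι → ℕ}
    (hsum : ∑ j, f j (l j) = z) {I : Finset ι} {i : ι} (hI : ∀ j ∉ I, l j ≤ l i) :
    |∑ j ∈ I, f j (l j)| ≤ (|z| + Fintype.card ι * C) * r (l i + K + 1) := by
  classical
  set u := l i + K + 1
  have hrest : ∑ j ∈ I, f j (l j) = z - ∑ j ∈ Iᶜ, f j (l j) := by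
    rw [← hsum, ← sum_add_sum_compl I]; ring
  have hcompl : |∑ j ∈ Iᶜ, f j (l j)| ≤ Fintype.card ι * C * r u :=
    calc |∑ j ∈ Iᶜ, f j (l j)| ≤ ∑ j ∈ Iᶜ, |f j (l j)| := abs_sum_le_sum_abs _ _
      _ ≤ ∑ j ∈ Iᶜ, C * r u := sum_le_sum fun j hj => (hf j _).trans (by
          gcongr; exact hr.monotone (by have := hI j (mem_compl.1 hj); omega))
      _ ≤ ∑ _j : ι, C * r u := sum_le_sum_of_subset_of_nonneg (subset_univ _) fun _ _ _ => by
          positivity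
      _ = Fintype.card ι * C * r u := by rw [sum_const, card_univ, nsmul_eq_mul, mul_assoc]
  have hz : |z| ≤ |z| * r u := le_mul_of_one_le_right (abs_nonneg z)
    (by exact_mod_cast (Nat.succ_pos _).trans_le (hr.id_le u))
  rw [hrest]
  calc |z - ∑ j ∈ Iᶜ, f j (l j)| ≤ |z| + |∑ j ∈ Iᶜ, f j (l j)| := abs_sub _ _
    _ ≤ (|z| + Fintype.card ι * C) * r u := by linarith

theorem IsRegularSequence.exists_le_add_of_abs_aeval_shift_le_uniform
    (hr : IsRegularSequence r) {ι : Type*} [Finite ι] (P : ι → ℤ[X]) (C : ℤ) :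
    ∃ M, ∀ p n u, aeval (shift ℤ) (P p) (Nat.cast ∘ r) n ≠ 0 →
      |aeval (shift ℤ) (P p) (Nat.cast ∘ r) n| ≤ C * r u → n ≤ u + M := by
  choose M hM using fun p => hr.exists_le_add_of_abs_aeval_shift_le (P p) C
  obtain ⟨M', hM'⟩ := Finite.bddAbove_range M
  exact ⟨M', fun p n u h0 hle => (hM p n u h0 hle).trans (by
    have : M p ≤ M' := hM' ⟨p, rfl⟩; omega)⟩

theorem IsRegularSequence.exists_gap_step (hr : IsRegularSequence r) {s : ℕ}
    {f : Fin s → ℕ → ℤ} {A : Fin s → ℤ[X]}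
    (hA : ∀ j, f j = aeval (shift ℤ) (A j) (Nat.cast ∘ r)) (z : ℤ) (G : ℕ) :
    ∃ G', ∀ l, IsNondegenerateSolution f z l → ∀ i,
      (∀ k, l i < l k → ∀ j, l j ≤ l k + G) → ∀ j, l j ≤ l i + G' := by
  obtain ⟨C, hC, K, hCK⟩ := exists_abs_aeval_shift_le hr.1.monotone A
  let B : Finset (Fin s) × (Fin s → Fin (G + 1)) → ℤ[X] := fun p =>
    ∑ j ∈ p.1, X ^ (p.2 j : ℕ) * A j
  obtain ⟨M, hM⟩ := hr.exists_le_add_of_abs_aeval_shift_le_uniform B (|z| + s * C)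
  refine ⟨K + 1 + M + G, fun l hl i hgap j => ?_⟩
  obtain ⟨hsum, -, hnd⟩ := hl
  set I := univ.filter fun k => l i < l k
  have hmemI : ∀ k, k ∈ I ↔ l i < l k := by simp [I]
  rcases I.eq_empty_or_nonempty with hI | hI
  · have := (hmemI j).not.1 (hI ▸ notMem_empty j)
    omega
  obtain ⟨k₀, hk₀, hmin⟩ := I.exists_min_image l hI
  have hspread : ∀ k ∈ I, l k₀ ≤ l k ∧ l k ≤ l k₀ + G :=
    fun k hk => ⟨hmin k hk, hgap k₀ ((hmemI k₀).1 hk₀) k⟩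
  -- the cap `min _ G` only places the offset in `Fin (G + 1)`: by `hspread` it is `l k - l k₀`
  let p : Finset (Fin s) × (Fin s → Fin (G + 1)) :=
    (I, fun k => ⟨min (l k - l k₀) G, by omega⟩)
  have hBp : aeval (shift ℤ) (B p) (Nat.cast ∘ r) (l k₀) = ∑ k ∈ I, f k (l k) := by
    simp only [B, p, map_sum, LinearMap.sum_apply, Finset.sum_apply, aeval_shift_X_pow_mul_apply]
    refine sum_congr rfl fun k hk => ?_
    have := hspread k hk
    rw [hA, show l k₀ + min (l k - l k₀) G = l k by omega]
  have hsub : ∑ k ∈ I, f k (l k) ≠ 0 :=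
    hnd I hI fun h => (hmemI i).not.2 (lt_irrefl _) (h ▸ mem_univ i)
  have hbound := abs_sum_le_of_sum_eq hr.1 hC (fun j n => hA j ▸ hCK j n) hsum
    fun j hj => not_lt.1 ((hmemI j).not.1 hj)
  rw [Fintype.card_fin] at hbound
  have hk₀le := hM p (l k₀) (l i + K + 1) (hBp ▸ hsub) (hBp ▸ hbound)
  by_cases hj : j ∈ I
  · have := hspread j hj
    omega
  · have := (hmemI j).not.1 hj
    omega

end RegularSequence

/-- for a regular sequence `r`, operators `f₁, …, f_s` on `r` and
`z ∈ ℤ`, there are finitely many tuples `m̄₁, …, m̄_k ∈ ℤ^s` such that every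
non-degenerate solution `(l₁, …, l_s)` of `f₁(x₁) + ⋯ + f_s(x_s) = z` satisfies
`l_j = l₁ + m_{ij}` for some `i`. -/
theorem nondegenerate_solutions_structure
    (r : ℕ → ℕ) (hr : IsRegularSequence r) (s : ℕ) (hs : 0 < s)
    (f : Fin s → ℕ → ℤ)
    (hf : ∀ j : Fin s, ∃ d : ℕ, ∃ a : ℕ → ℤ, a d ≠ 0 ∧
      ∀ n : ℕ, f j n = ∑ i ∈ Finset.range (d + 1), a i * (r (n + i) : ℤ))
    (z : ℤ) :
    ∃ k : ℕ, ∃ m : Fin k → Fin s → ℤ,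
      ∀ l : Fin s → ℕ, IsNondegenerateSolution f z l →
        ∃ i : Fin k, ∀ j : Fin s, (l j : ℤ) = (l ⟨0, hs⟩ : ℤ) + m i j := by
  choose d a _ hfa using hf
  choose A hA using fun j => exists_aeval_shift_eq (d j) (a j)
  have hfA : ∀ j, f j = aeval (shift ℤ) (A j) (Nat.cast ∘ r) := fun j => by
    rw [hA]
    exact funext (hfa j)
  choose g hg using hr.exists_gap_step hfA z
  exact exists_offsets_of_forall_le_add ⟨0, hs⟩ (le_add_of_gap_step hg)
end

section
/- Assume Dickson's conjecture. Let f_i(x) = a_i x + b_i for i ≤ k, where a_i, b_i are natural numbers with a_i ≥ 1. Let m, r be fixed coprime natural numbers with r < m. Suppose that no integer n > 1 divides ∏_{i≤k} f_i(s) for every s ∈ ℕ, and that there exists ε with 0 < ε < m such that a_i ε + b_i ≡ r (mod m) for all i ≤ k. Then there exist infinitely many natural numbers s such that for all i ≤ k, f_i(s) is a prime number congruent to r modulo m. -/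
/-!
Apply Dickson's conjecture to `gᵢ(x) = fᵢ(m x + ε)`, whose values are all `≡ r (mod m)`. A prime `p`
dividing every `∏ gᵢ(x)` would either divide `m`, hence `r ^ (k + 1)`, contradicting `gcd m r = 1`,
or be coprime to `m`; then `x ↦ m x + ε` is onto modulo `p`, so `p` would divide every `∏ fᵢ(t)`.
-/

/-- Dickson's conjecture (D): given linear polynomials `fᵢ(x) = aᵢ x + bᵢ`
(`i < k`, `aᵢ ≥ 1`, `bᵢ ≥ 0`) such that no integer `n > 1` divides
`∏_{i<k} fᵢ(s)` for every `s ∈ ℕ`, there are infinitely many `m ∈ ℕ` such that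
`fᵢ(m)` is prime for all `i < k`. -/
def DicksonConjecture : Prop :=
  ∀ (k : ℕ) (a b : ℕ → ℤ), 1 ≤ k →
    (∀ i < k, 1 ≤ a i) → (∀ i < k, 0 ≤ b i) →
    (¬ ∃ n : ℤ, 1 < n ∧ ∀ s : ℕ, n ∣ ∏ i ∈ Finset.range k, (a i * s + b i)) →
    {m : ℕ | ∀ i < k, Prime (a i * m + b i)}.Infinite

open Finset

theorem Nat.exists_mul_add_modEq {m n : ℕ} [NeZero n] (hmn : m.Coprime n) (ε t : ℕ) :
    ∃ x, m * x + ε ≡ t [MOD n] := by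
  refine ⟨(((t : ZMod n) - ε) * ↑(ZMod.unitOfCoprime m hmn)⁻¹).val, ?_⟩
  rw [← ZMod.natCast_eq_natCast_iff]
  push_cast
  rw [ZMod.natCast_val, ZMod.cast_id', id, mul_left_comm, ← ZMod.coe_unitOfCoprime m hmn,
    Units.mul_inv, mul_one, sub_add_cancel]

theorem mul_comp_add_modEq (a b m ε x : ℕ) : a * (m * x + ε) + b ≡ a * ε + b [MOD m] :=
  ((show m * x + ε ≡ ε [MOD m] by simp [Nat.ModEq]).mul_left a).add_right b

section AffineProducts

variable (a b : ℕ → ℕ) (s : Finset ℕ)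

theorem prod_mul_add_modEq {n x y : ℕ} (h : x ≡ y [MOD n]) :
    ∏ i ∈ s, (a i * x + b i) ≡ ∏ i ∈ s, (a i * y + b i) [MOD n] :=
  Nat.ModEq.prod fun i _ => (h.mul_left (a i)).add_right (b i)

theorem dvd_prod_mul_add_of_forall_dvd_prod_comp {m n ε : ℕ} [NeZero n] (hmn : m.Coprime n)
    (h : ∀ x, n ∣ ∏ i ∈ s, (a i * (m * x + ε) + b i)) (t : ℕ) :
    n ∣ ∏ i ∈ s, (a i * t + b i) := by
  obtain ⟨x, hx⟩ := Nat.exists_mul_add_modEq hmn ε t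
  exact ((prod_mul_add_modEq a b s hx).dvd_iff dvd_rfl).mp (h x)

theorem prod_comp_modEq_pow {m ε r : ℕ} (hmod : ∀ i ∈ s, a i * ε + b i ≡ r [MOD m]) (x : ℕ) :
    ∏ i ∈ s, (a i * (m * x + ε) + b i) ≡ r ^ s.card [MOD m] := by
  rw [← prod_const]
  exact Nat.ModEq.prod fun i hi => (mul_comp_add_modEq (a i) (b i) m ε x).trans (hmod i hi)

theorem exists_not_dvd_prod_comp {m ε r : ℕ} (hco : m.Coprime r)
    (hmod : ∀ i ∈ s, a i * ε + b i ≡ r [MOD m])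
    (hfix : ∀ p, p.Prime → ∃ t, ¬ p ∣ ∏ i ∈ s, (a i * t + b i))
    (p : ℕ) (hp : p.Prime) : ∃ x, ¬ p ∣ ∏ i ∈ s, (a i * (m * x + ε) + b i) := by
  by_contra! hdvd
  by_cases hpm : p ∣ m
  · have hpr : p ∣ r :=
      hp.dvd_of_dvd_pow (((prod_comp_modEq_pow a b s hmod 0).dvd_iff hpm).mp (hdvd 0))
    exact hp.one_lt.ne' (Nat.eq_one_of_dvd_coprimes hco hpm hpr)
  · have : NeZero p := ⟨hp.ne_zero⟩
    obtain ⟨t, ht⟩ := hfix p hp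
    exact ht (dvd_prod_mul_add_of_forall_dvd_prod_comp a b s
      (hp.coprime_iff_not_dvd.mpr hpm).symm hdvd t)

end AffineProducts

theorem DicksonConjecture.infinite_setOf_forall_prime (hD : DicksonConjecture) {k : ℕ}
    {a b : ℕ → ℕ} (ha : ∀ i ≤ k, 1 ≤ a i)
    (hfix : ∀ p, p.Prime → ∃ s, ¬ p ∣ ∏ i ∈ range (k + 1), (a i * s + b i)) :
    {s : ℕ | ∀ i ≤ k, (a i * s + b i).Prime}.Infinite := by
  have hfixℤ : ¬ ∃ n : ℤ, 1 < n ∧ ∀ s : ℕ, n ∣ ∏ i ∈ range (k + 1), ((a i : ℤ) * s + b i) := by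
    rintro ⟨n, hn, hdvd⟩
    obtain ⟨p, hp, hpn⟩ := Nat.exists_prime_and_dvd (n := n.natAbs) (by omega)
    obtain ⟨s, hs⟩ := hfix p hp
    have hns : n.natAbs ∣ _ := Int.dvd_natCast.mp (by exact_mod_cast hdvd s)
    exact hs (hpn.trans hns)
  convert hD (k + 1) (fun i => a i) (fun i => b i) k.succ_pos
    (fun i hi => by exact_mod_cast ha i (Nat.lt_succ_iff.mp hi)) (fun i _ => by positivity)
    hfixℤ using 3 with s
  simp only [Nat.lt_succ_iff, Nat.prime_iff_prime_int]
  push_cast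
  rfl

theorem infinitely_many_primes_in_congruence_class_of_dickson_general
    (hD : DicksonConjecture)
    (k : ℕ) (a b : ℕ → ℕ) (ha : ∀ i ≤ k, 1 ≤ a i)
    (m r : ℕ) (hrm : r < m) (hco : Nat.Coprime m r)
    (hstar : ¬ ∃ n : ℕ, 1 < n ∧ ∀ s : ℕ,
      n ∣ ∏ i ∈ Finset.range (k + 1), (a i * s + b i))
    (ε : ℕ)
    (hmod : ∀ i ≤ k, a i * ε + b i ≡ r [MOD m]) :
    {s : ℕ | ∀ i ≤ k,
      Nat.Prime (a i * s + b i) ∧ a i * s + b i ≡ r [MOD m]}.Infinite := by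
  have hm : 0 < m := by omega
  have hmod' : ∀ i ∈ range (k + 1), a i * ε + b i ≡ r [MOD m] := fun i hi =>
    hmod i (Nat.lt_succ_iff.mp (mem_range.mp hi))
  have hfix := exists_not_dvd_prod_comp a b _ hco hmod' fun p hp => by
    simpa using fun h => hstar ⟨p, hp.one_lt, h⟩
  have hS := hD.infinite_setOf_forall_prime (a := fun i => a i * m) (b := fun i => a i * ε + b i)
    (fun i hi => Nat.mul_pos (ha i hi) hm) fun p hp => by
      simpa only [mul_add, mul_assoc, add_assoc] using hfix p hp
  have hinj : (fun x => m * x + ε).Injective := fun x y h =>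
    Nat.eq_of_mul_eq_mul_left hm (Nat.add_right_cancel h)
  refine (hS.image hinj.injOn).mono ?_
  rintro _ ⟨x, hx, rfl⟩ i hi
  have hcomp : a i * (m * x + ε) + b i = a i * m * x + (a i * ε + b i) := by ring
  exact ⟨hcomp ▸ hx i hi, (mul_comp_add_modEq (a i) (b i) m ε x).trans (hmod i hi)⟩

/-- assuming Dickson's conjecture, if `fᵢ(x) = aᵢ x + bᵢ` (`i ≤ k`,
`aᵢ ≥ 1` naturals), `r < m` are coprime, no integer `n > 1` divides
`∏_{i ≤ k} fᵢ(s)` for all `s`, and for some `0 < ε < m` one has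
`aᵢ ε + bᵢ ≡ r (mod m)` for all `i ≤ k`, then there are infinitely many `s`
such that each `fᵢ(s)` is a prime congruent to `r` modulo `m`. -/
theorem infinitely_many_primes_in_congruence_class_of_dickson
    (hD : DicksonConjecture)
    (k : ℕ) (a b : ℕ → ℕ) (ha : ∀ i ≤ k, 1 ≤ a i)
    (m r : ℕ) (hrm : r < m) (hco : Nat.Coprime m r)
    (hstar : ¬ ∃ n : ℕ, 1 < n ∧ ∀ s : ℕ,
      n ∣ ∏ i ∈ Finset.range (k + 1), (a i * s + b i))
    (ε : ℕ) (hε0 : 0 < ε) (hεm : ε < m)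
    (hmod : ∀ i ≤ k, a i * ε + b i ≡ r [MOD m]) :
    {s : ℕ | ∀ i ≤ k,
      Nat.Prime (a i * s + b i) ∧ a i * s + b i ≡ r [MOD m]}.Infinite :=
  infinitely_many_primes_in_congruence_class_of_dickson_general hD k a b ha m r hrm hco hstar ε hmod
end

section
/- Assume Dickson's conjecture. Fix coprime natural numbers m, r with r < m. Let f_i(x) = a_i x + b_i with integers a_i ≥ 1, b_i, for i < k, and g_j(x) = c_j x + d_j with integers c_j ≥ 1, d_j, for j < k'. Suppose there exists ε with 0 < ε < m such that a_i ε + b_i ≡ r (mod m) for all i < k, that no integer n > 1 divides ∏_{i<k} f_i(s) for every s ∈ ℕ, and that (a_i, b_i) ≠ (c_j, d_j) for all i < k and j < k'. Then there exist infinitely many natural numbers s for which, for all i < k and j < k', f_i(s) is prime and congruent to r modulo m, and g_j(s) is composite. -/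
open Filter

theorem Int.ModEq.isCoprime_iff {M y y' : ℤ} (h : y ≡ y' [ZMOD M]) :
    IsCoprime M y ↔ IsCoprime M y' := by
  obtain ⟨t, rfl⟩ := Int.modEq_iff_add_fac.1 h
  exact IsCoprime.add_mul_left_right_iff.symm

theorem exists_nat_dvd_mul_add {A q : ℤ} (h : IsCoprime A q) (hq : q ≠ 0) (B : ℤ) :
    ∃ x : ℕ, q ∣ A * x + B := by
  obtain ⟨u, v, huv⟩ := h
  refine ⟨(-B * u % q).toNat, Int.modEq_zero_iff_dvd.1 ?_⟩
  rw [Int.toNat_of_nonneg (Int.emod_nonneg _ hq)]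
  refine (((Int.mod_modEq _ _).mul_left A).add_right B).trans (Int.modEq_zero_iff_dvd.2 ?_)
  exact ⟨B * v, by linear_combination (-B) * huv⟩

theorem exists_prime_not_dvd {N : ℤ} (hN : N ≠ 0) : ∃ q : ℕ, q.Prime ∧ ¬ (q : ℤ) ∣ N := by
  obtain ⟨q, hNq, hq⟩ := Nat.exists_infinite_primes (N.natAbs + 1)
  refine ⟨q, hq, fun hdvd => ?_⟩
  have := Nat.le_of_dvd (Int.natAbs_pos.2 hN) (Int.natCast_dvd.1 hdvd)
  omega

theorem eventually_lt_mul_add {A : ℤ} (hA : 0 < A) (B C : ℤ) :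
    ∀ᶠ n : ℕ in atTop, C < A * n + B := by
  filter_upwards [eventually_gt_atTop (C - B).toNat] with n hn
  have : C - B < n := by omega
  nlinarith

theorem eventually_forall_lt {α : Type*} {l : Filter α} {k : ℕ} {p : ℕ → α → Prop}
    (h : ∀ i < k, ∀ᶠ x in l, p i x) : ∀ᶠ x in l, ∀ i < k, p i x :=
  (eventually_all_finite (Set.finite_lt_nat k)).2 h

theorem not_prime_of_not_isCoprime {M z : ℤ} (hM : 0 < M) (hMz : M < z)
    (h : ¬ IsCoprime M z) : ¬ Prime z := fun hz =>
  h (hz.coprime_iff_not_dvd.2 fun hzM => (Int.le_of_dvd hM hzM).not_gt hMz).symm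

theorem not_prime_of_mul_eq_mul_prime {a c p z : ℤ} (ha : 0 < a) (hap : a < p) (hp : Prime p)
    (hz : 0 ≤ z) (h : a * z = c * p) (hac : a ≠ c) : ¬ Prime z := by
  intro hzp
  have hpaz : p ∣ a * z := ⟨c, by rw [h, mul_comm]⟩
  have hpz : p ∣ z :=
    (hp.dvd_or_dvd hpaz).resolve_left fun hpa => (Int.le_of_dvd ha hpa).not_gt hap
  have hpz_eq : p = z :=
    Int.eq_of_associated_of_nonneg (hp.associated_of_dvd hzp hpz) (by omega) hz
  exact hac (mul_right_cancel₀ hp.ne_zero (hpz_eq ▸ h))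

theorem exists_nat_of_not_prime {z : ℤ} (hz : 1 < z) (hzp : ¬ Prime z) :
    ∃ t : ℕ, z = t ∧ 1 < t ∧ ¬ t.Prime := by
  lift z to ℕ using (by omega)
  exact ⟨z, rfl, by exact_mod_cast hz, fun h => hzp (Nat.prime_iff_prime_int.1 h)⟩

/-- Condition `(⋆)` on the linear polynomials `aᵢ x + bᵢ`, `i < k`. -/
def HasNoFixedDivisor (k : ℕ) (a b : ℕ → ℤ) : Prop :=
  ¬ ∃ n : ℤ, 1 < n ∧ ∀ s : ℕ, n ∣ ∏ i ∈ Finset.range k, (a i * s + b i)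

section Linear

variable {k : ℕ} {a b : ℕ → ℤ}

theorem exists_prime_dvd_of_isCoprime {M : ℕ} (hM : 0 < M) {e : ℤ}
    (hcop : ∀ i < k, IsCoprime (M : ℤ) (a i * e + b i)) {c d : ℤ} (hc : c ≠ 0)
    (hres : ∀ i < k, c * b i ≠ a i * d) :
    ∃ q : ℕ, ∃ e' : ℤ, q.Prime ∧ e' ≡ e [ZMOD M] ∧
      (∀ i < k, IsCoprime ((M : ℤ) * q) (a i * e' + b i)) ∧ (q : ℤ) ∣ c * e' + d := by
  obtain ⟨q, hq, hqN⟩ :=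
    exists_prime_not_dvd (N := c * M * ∏ i ∈ Finset.range k, (c * b i - a i * d))
      (mul_ne_zero (mul_ne_zero hc (by exact_mod_cast hM.ne')) <| Finset.prod_ne_zero_iff.2
        fun i hi => sub_ne_zero.2 (hres i (Finset.mem_range.1 hi)))
  have hqZ : Prime (q : ℤ) := Nat.prime_iff_prime_int.1 hq
  have hqres : ∀ i < k, ¬ (q : ℤ) ∣ c * b i - a i * d := fun i hi hdvd =>
    hqN <| dvd_mul_of_dvd_right (hdvd.trans <| Finset.dvd_prod_of_mem
      (fun i => c * b i - a i * d) (Finset.mem_range.2 hi)) _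
  obtain ⟨t, ht⟩ := exists_nat_dvd_mul_add
    (hqZ.coprime_iff_not_dvd.2 fun h => hqN (h.mul_right _)).symm
    (by exact_mod_cast hq.ne_zero) (c * e + d)
  have he' : e ≡ e + M * t [ZMOD M] := Int.modEq_iff_add_fac.2 ⟨t, rfl⟩
  have hg : c * (e + M * t) + d = c * M * t + (c * e + d) := by ring
  refine ⟨q, e + M * t, hq, he'.symm, fun i hi => ?_, hg ▸ ht⟩
  refine IsCoprime.mul_left_iff.2 ⟨?_, hqZ.coprime_iff_not_dvd.2 fun hf => hqres i hi ?_⟩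
  · exact ((he'.mul_left _).add_right _).isCoprime_iff.1 (hcop i hi)
  · have hresultant : c * b i - a i * d =
        c * (a i * (e + M * t) + b i) - a i * (c * M * t + (c * e + d)) := by ring
    rw [hresultant]
    exact dvd_sub (hf.mul_left _) (ht.mul_left _)

theorem exists_modulus {M₀ : ℕ} (hM₀ : 0 < M₀) {e₀ : ℤ}
    (hcop : ∀ i < k, IsCoprime (M₀ : ℤ) (a i * e₀ + b i)) {k' : ℕ} {c d : ℕ → ℤ}
    (hc : ∀ j < k', c j ≠ 0) :
    ∃ M : ℕ, ∃ e : ℤ, 0 < M ∧ M₀ ∣ M ∧ e ≡ e₀ [ZMOD M₀] ∧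
      (∀ i < k, IsCoprime (M : ℤ) (a i * e + b i)) ∧
      ∀ j < k', (∃ i < k, c j * b i = a i * d j) ∨ ¬ IsCoprime (M : ℤ) (c j * e + d j) := by
  induction k' with
  | zero => exact ⟨M₀, e₀, hM₀, dvd_rfl, .refl _, hcop, by simp⟩
  | succ n ih =>
    obtain ⟨M, e, hM, hM₀M, he, hcopM, hg⟩ := ih fun j hj => hc j (by omega)
    by_cases hprop : ∃ i < k, c n * b i = a i * d n
    · refine ⟨M, e, hM, hM₀M, he, hcopM, fun j hj => ?_⟩
      rcases Nat.lt_succ_iff_lt_or_eq.1 hj with hj | rfl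
      exacts [hg j hj, Or.inl hprop]
    push Not at hprop
    obtain ⟨q, e', hq, he', hcop', hqg⟩ :=
      exists_prime_dvd_of_isCoprime hM hcopM (hc n (by omega)) hprop
    refine ⟨M * q, e', Nat.mul_pos hM hq.pos, hM₀M.mul_right q,
      (he'.of_dvd (by exact_mod_cast hM₀M)).trans he, by exact_mod_cast hcop', fun j hj => ?_⟩
    push_cast
    rcases Nat.lt_succ_iff_lt_or_eq.1 hj with hj | rfl
    · refine (hg j hj).imp id fun hnc hcop => hnc ?_
      exact ((he'.mul_left _).add_right _).isCoprime_iff.1 hcop.of_mul_left_left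
    · exact Or.inr fun hcop => (Nat.prime_iff_prime_int.1 hq).not_isUnit
        (hcop.isUnit_of_dvd' (dvd_mul_left _ _) hqg)

theorem exists_nat_modEq_forall_nonneg (ha : ∀ i < k, 1 ≤ a i) {M : ℕ} (hM : 0 < M) (e : ℤ) :
    ∃ e' : ℕ, (e' : ℤ) ≡ e [ZMOD M] ∧ ∀ i < k, 0 ≤ a i * e' + b i := by
  have hMZ : (0 : ℤ) < M := by exact_mod_cast hM
  obtain ⟨n, hn, hnb⟩ := ((eventually_lt_mul_add hMZ e (-1)).and <| eventually_forall_lt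
    (p := fun i n : ℕ => -1 < a i * M * n + (a i * e + b i)) fun i hi =>
      eventually_lt_mul_add (mul_pos (by linarith [ha i hi]) hMZ) (a i * e + b i) (-1)).exists
  lift e + M * n to ℕ using (by omega) with e' he'
  refine ⟨e', he' ▸ (Int.modEq_iff_add_fac.2 ⟨n, rfl⟩).symm, fun i hi => ?_⟩
  have := hnb i hi
  rw [he']
  linarith

theorem HasNoFixedDivisor.comp_mul_add (hstar : HasNoFixedDivisor k a b) {M e : ℕ}
    (hcop : ∀ i < k, IsCoprime (M : ℤ) (a i * e + b i)) :
    HasNoFixedDivisor k (fun i => a i * M) (fun i => a i * e + b i) := by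
  rintro ⟨n, hn, hdvd⟩
  obtain ⟨p, hp, hpn⟩ := Nat.exists_prime_and_dvd (n := n.natAbs) (by omega)
  have hpZ : Prime (p : ℤ) := Nat.prime_iff_prime_int.1 hp
  have hpF : ∀ x : ℕ, (p : ℤ) ∣ ∏ i ∈ Finset.range k, (a i * M * x + (a i * e + b i)) :=
    fun x => (Int.natCast_dvd.2 hpn).trans (hdvd x)
  by_cases hpM : (p : ℤ) ∣ M
  · have hcopProd := IsCoprime.prod_right fun i hi => hcop i (Finset.mem_range.1 hi)
    exact hpZ.not_isUnit (hcopProd.isUnit_of_dvd' hpM (by simpa using hpF 0))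
  refine hstar ⟨p, by exact_mod_cast hp.one_lt, fun s => ?_⟩
  obtain ⟨x, hx⟩ := exists_nat_dvd_mul_add (hpZ.coprime_iff_not_dvd.2 hpM).symm
    (by exact_mod_cast hp.ne_zero) (e - s)
  have hxs : (s : ℤ) ≡ M * x + e [ZMOD p] := Int.modEq_iff_dvd.2 (by rwa [add_sub_assoc])
  have hprod : ∏ i ∈ Finset.range k, (a i * s + b i) ≡
      ∏ i ∈ Finset.range k, (a i * M * x + (a i * e + b i)) [ZMOD p] :=
    Int.ModEq.prod fun i _ => by convert (hxs.mul_left (a i)).add_right (b i) using 1; ring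
  exact Int.modEq_zero_iff_dvd.1 (hprod.trans (Int.modEq_zero_iff_dvd.2 (hpF x)))

namespace DicksonConjecture

theorem infinite_setOf_prime (hD : DicksonConjecture) (ha : ∀ i < k, 1 ≤ a i)
    (hb : ∀ i < k, 0 ≤ b i) (hstar : HasNoFixedDivisor k a b) :
    {x : ℕ | ∀ i < k, Prime (a i * x + b i)}.Infinite := by
  rcases Nat.eq_zero_or_pos k with rfl | hk
  · simpa using Set.infinite_univ
  · exact hD k a b hk ha hb hstar

theorem infinite_setOf_modEq_prime (hD : DicksonConjecture) (ha : ∀ i < k, 1 ≤ a i)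
    (hstar : HasNoFixedDivisor k a b) {M : ℕ} (hM : 0 < M) {e : ℤ}
    (hcop : ∀ i < k, IsCoprime (M : ℤ) (a i * e + b i)) :
    {s : ℕ | (s : ℤ) ≡ e [ZMOD M] ∧ ∀ i < k, Prime (a i * s + b i)}.Infinite := by
  obtain ⟨e', he', hb'⟩ := exists_nat_modEq_forall_nonneg ha hM e
  have hcop' : ∀ i < k, IsCoprime (M : ℤ) (a i * e' + b i) :=
    fun i hi => ((he'.mul_left _).add_right _).isCoprime_iff.2 (hcop i hi)
  have hS := hD.infinite_setOf_prime
    (fun i hi => one_le_mul_of_one_le_of_one_le (ha i hi) (by exact_mod_cast hM)) hb'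
    (hstar.comp_mul_add hcop')
  refine (hS.image (f := fun x => M * x + e') fun x _ y _ hxy => ?_).mono ?_
  · simpa [hM.ne'] using hxy
  rintro _ ⟨x, hx, rfl⟩
  refine ⟨(Int.modEq_iff_add_fac.2 ⟨x, by push_cast; ring⟩).symm.trans he', fun i hi => ?_⟩
  convert hx i hi using 1
  push_cast
  ring

end DicksonConjecture

end Linear

theorem infinitely_many_primes_avoiding_composites_of_dickson_general
    (hD : DicksonConjecture)
    (m r : ℕ) (hrm : r < m) (hco : Nat.Coprime m r)
    (k k' : ℕ) (a b : ℕ → ℤ) (c d : ℕ → ℤ)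
    (ha : ∀ i < k, 1 ≤ a i) (hc : ∀ j < k', 1 ≤ c j)
    (ε : ℕ)
    (hmod : ∀ i < k, a i * ε + b i ≡ (r : ℤ) [ZMOD (m : ℤ)])
    (hstar : ¬ ∃ n : ℤ, 1 < n ∧ ∀ s : ℕ,
      n ∣ ∏ i ∈ Finset.range k, (a i * s + b i))
    (hne : ∀ i < k, ∀ j < k', (a i, b i) ≠ (c j, d j)) :
    {s : ℕ |
      (∀ i < k, Prime (a i * s + b i) ∧ a i * s + b i ≡ (r : ℤ) [ZMOD (m : ℤ)]) ∧
      (∀ j < k', ∃ t : ℕ, (c j * s + d j : ℤ) = t ∧ 1 < t ∧ ¬ Nat.Prime t)}.Infinite := by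
  obtain ⟨M, e, hM, hmM, heε, hcop, hg⟩ := exists_modulus (M₀ := m) (e₀ := ε) (by omega)
    (fun i hi => (hmod i hi).symm.isCoprime_iff.1 (Nat.isCoprime_iff_coprime.2 hco))
    (c := c) (d := d) fun j hj => by linarith [hc j hj]
  have hlarge : ∀ᶠ s : ℕ in atTop,
      (∀ i < k, a i < a i * s + b i) ∧ ∀ j < k', (M : ℤ) < c j * s + d j :=
    (eventually_forall_lt fun i hi => eventually_lt_mul_add (by linarith [ha i hi]) _ _).and
      (eventually_forall_lt fun j hj => eventually_lt_mul_add (by linarith [hc j hj]) _ _)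
  rw [← Nat.frequently_atTop_iff_infinite]
  have hprimes := hD.infinite_setOf_modEq_prime ha hstar hM hcop
  refine ((Nat.frequently_atTop_iff_infinite.2 hprimes).and_eventually hlarge).mono ?_
  rintro s ⟨⟨hse, hprime⟩, hfa, hgM⟩
  have hsε : (s : ℤ) ≡ ε [ZMOD m] := (hse.of_dvd (by exact_mod_cast hmM)).trans heε
  refine ⟨fun i hi => ⟨hprime i hi, ((hsε.mul_left _).add_right _).trans (hmod i hi)⟩,
    fun j hj => ?_⟩
  refine exists_nat_of_not_prime (by linarith [hgM j hj]) ?_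
  rcases hg j hj with ⟨i, hi, hprop⟩ | hnc
  · refine not_prime_of_mul_eq_mul_prime (c := c j) (by linarith [ha i hi]) (hfa i hi) (hprime i hi)
      (by linarith [hgM j hj]) (by linear_combination -hprop) fun hac => hne i hi j hj ?_
    rw [← hac] at hprop
    exact Prod.ext hac (mul_left_cancel₀ (by linarith [ha i hi]) hprop)
  · exact not_prime_of_not_isCoprime (by exact_mod_cast hM) (hgM j hj)
      fun h => hnc (((hse.mul_left _).add_right _).isCoprime_iff.1 h)

/-- assuming Dickson's conjecture, with `fᵢ(x) = aᵢ x + bᵢ`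
(`i < k`, integers, `aᵢ ≥ 1`) and `gⱼ(x) = cⱼ x + dⱼ` (`j < k'`, integers,
`cⱼ ≥ 1`), `r < m` coprime, some `0 < ε < m` with `aᵢ ε + bᵢ ≡ r (mod m)`, the
condition `(⋆)` for `f̄`, and `(aᵢ, bᵢ) ≠ (cⱼ, dⱼ)` for all `i, j`, there are
infinitely many `s` such that each `fᵢ(s)` is a prime congruent to `r` mod `m`
and each `gⱼ(s)` is composite. -/
theorem infinitely_many_primes_avoiding_composites_of_dickson
    (hD : DicksonConjecture)
    (m r : ℕ) (hrm : r < m) (hco : Nat.Coprime m r)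
    (k k' : ℕ) (a b : ℕ → ℤ) (c d : ℕ → ℤ)
    (ha : ∀ i < k, 1 ≤ a i) (hc : ∀ j < k', 1 ≤ c j)
    (ε : ℕ) (hε0 : 0 < ε) (hεm : ε < m)
    (hmod : ∀ i < k, a i * ε + b i ≡ (r : ℤ) [ZMOD (m : ℤ)])
    (hstar : ¬ ∃ n : ℤ, 1 < n ∧ ∀ s : ℕ,
      n ∣ ∏ i ∈ Finset.range k, (a i * s + b i))
    (hne : ∀ i < k, ∀ j < k', (a i, b i) ≠ (c j, d j)) :
    {s : ℕ |
      (∀ i < k, Prime (a i * s + b i) ∧ a i * s + b i ≡ (r : ℤ) [ZMOD (m : ℤ)]) ∧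
      (∀ j < k', ∃ t : ℕ, (c j * s + d j : ℤ) = t ∧ 1 < t ∧ ¬ Nat.Prime t)}.Infinite :=
  infinitely_many_primes_avoiding_composites_of_dickson_general hD m r hrm hco k k' a b c d ha hc ε
    hmod hstar hne
end

section
/- Let M be a submonoid of (ℤ, ·, 1) and let G be the subgroup of (ℚ \ {0}, ·, 1) generated by M; assume G has the Mann property. Let n ≥ 2 and let a_1,…,a_n be nonzero integers. Then there exists a finite set S ⊆ G^{n−1} such that every tuple (x_1,…,x_n) ∈ M^n satisfying a_1 x_1 + ⋯ + a_n x_n = 0, with Σ_{i∈I} a_i x_i ≠ 0 for every proper nonempty subset I ⊊ {1,…,n}, is of the form x_j = g_j x_1 for all j ∈ {2,…,n}, for some (g_2,…,g_n) ∈ S; moreover one can take S to be the set of tuples (g_2,…,g_n) ∈ G^{n−1} that are non-degenerate solutions of a_1 + a_2 x_2 + ⋯ + a_n x_n = 0. -/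
/-- The subgroup of `ℚˣ` (the multiplicative group of nonzero rationals)
generated by a submonoid `M` of `(ℤ, ·, 1)`. -/
def subgroupGeneratedBy (M : Submonoid ℤ) : Subgroup ℚˣ :=
  Subgroup.closure {u : ℚˣ | ∃ m ∈ M, (u : ℚ) = (m : ℚ)}

/-- The underlying set of rationals of the subgroup of `ℚ \ {0}` generated
by a submonoid `M` of `(ℤ, ·, 1)`. -/
def GSet (M : Submonoid ℤ) : Set ℚ :=
  (fun u : ℚˣ => (u : ℚ)) '' (subgroupGeneratedBy M : Set ℚˣ)

/-- A subset `X` of `ℚ` has the Mann property: for all nonzero rationals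
`q₁, …, q_n`, the equation `q₁ x₁ + ⋯ + q_n x_n = 1` has only finitely many
non-degenerate solutions in `X^n`, where a solution is non-degenerate if every
nonempty subsum `∑_{i ∈ I} qᵢ xᵢ` is nonzero. -/
def MannProperty (X : Set ℚ) : Prop :=
  ∀ (n : ℕ), 1 ≤ n → ∀ q : Fin n → ℚ, (∀ i, q i ≠ 0) →
    {x : Fin n → ℚ | (∀ i, x i ∈ X) ∧ (∑ i, q i * x i) = 1 ∧
      ∀ I : Finset (Fin n), I.Nonempty → (∑ i ∈ I, q i * x i) ≠ 0}.Finite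

/-!
Dividing a non-degenerate solution `(x₁, …, x_n)` of `∑ aᵢ xᵢ = 0` by `x₁` gives a solution
`(1, g₂, …, g_n)` with `gⱼ ∈ G`, and solving for the first term shows that `(g₂, …, g_n)` is a
non-degenerate solution of `∑_{j ≥ 2} (-aⱼ / a₁) gⱼ = 1`. A proper subsum of the homogeneous
equation not containing the first term is, up to the factor `-1/a₁`, a subsum of the
inhomogeneous one, so the Mann property bounds the number of such `(g₂, …, g_n)`.
-/

open Finset

lemma Finset.ne_zero_of_forall_proper_sum_ne_zero {ι M : Type*} [Fintype ι] [Nontrivial ι]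
    [AddCommMonoid M] {f : ι → M}
    (hf : ∀ I : Finset ι, I.Nonempty → I ≠ univ → ∑ i ∈ I, f i ≠ 0) (i : ι) : f i ≠ 0 := by
  simpa using hf {i} (singleton_nonempty i) (singleton_ne_univ i)

lemma Fin.map_succEmb_ne_univ {k : ℕ} (I : Finset (Fin k)) :
    I.map (Fin.succEmb k) ≠ univ := fun h =>
  have h0 : (0 : Fin (k + 1)) ∈ I.map (Fin.succEmb k) := h ▸ mem_univ 0
  let ⟨_, _, hj⟩ := mem_map.mp h0
  Fin.succ_ne_zero _ hj

lemma Fin.sum_neg_div_mul_succ {K : Type*} [Field K] {k : ℕ} (w g : Fin (k + 1) → K)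
    (I : Finset (Fin k)) :
    ∑ j ∈ I, -w j.succ / w 0 * g j.succ = -(∑ i ∈ I.map (Fin.succEmb k), w i * g i) / w 0 := by
  rw [sum_map, ← sum_neg_distrib, sum_div]
  refine sum_congr rfl fun j _ => ?_
  simp only [Fin.coe_succEmb]
  ring

lemma intCast_div_mem_GSet (M : Submonoid ℤ) {m₁ m₂ : ℤ} (h₁ : m₁ ∈ M) (h₂ : m₂ ∈ M)
    (hm₁ : m₁ ≠ 0) (hm₂ : m₂ ≠ 0) : (m₁ : ℚ) / (m₂ : ℚ) ∈ GSet M := by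
  have hq₁ : (m₁ : ℚ) ≠ 0 := Int.cast_ne_zero.mpr hm₁
  have hq₂ : (m₂ : ℚ) ≠ 0 := Int.cast_ne_zero.mpr hm₂
  have hu₁ : Units.mk0 _ hq₁ ∈ subgroupGeneratedBy M := Subgroup.subset_closure ⟨m₁, h₁, rfl⟩
  have hu₂ : Units.mk0 _ hq₂ ∈ subgroupGeneratedBy M := Subgroup.subset_closure ⟨m₂, h₂, rfl⟩
  refine ⟨Units.mk0 _ hq₁ * (Units.mk0 _ hq₂)⁻¹, mul_mem hu₁ (inv_mem hu₂), ?_⟩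
  simp [div_eq_mul_inv]

section Normalized

variable {k : ℕ}

def normalizedNondegenerateSolutions (X : Set ℚ) (w : Fin (k + 1) → ℚ) :
    Set (Fin (k + 1) → ℚ) :=
  {g | g 0 = 1 ∧ (∀ j, j ≠ 0 → g j ∈ X) ∧ ∑ i, w i * g i = 0 ∧
    ∀ I : Finset (Fin (k + 1)), I.Nonempty → I ≠ univ → ∑ i ∈ I, w i * g i ≠ 0}

lemma tail_mem_mannSolutions {X : Set ℚ} {w g : Fin (k + 1) → ℚ} (hw : w 0 ≠ 0)
    (hg : g ∈ normalizedNondegenerateSolutions X w) :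
    (fun j => g j.succ) ∈ {x : Fin k → ℚ | (∀ i, x i ∈ X) ∧
      ∑ i, -w i.succ / w 0 * x i = 1 ∧
      ∀ I : Finset (Fin k), I.Nonempty → ∑ i ∈ I, -w i.succ / w 0 * x i ≠ 0} := by
  obtain ⟨hg0, hgX, hgsum, hgnd⟩ := hg
  refine ⟨fun j => hgX _ (Fin.succ_ne_zero j), ?_, fun I hI => ?_⟩
  · have htail : ∑ i ∈ univ.map (Fin.succEmb k), w i * g i = -w 0 := by
      rw [sum_map]
      rw [Fin.sum_univ_succ, hg0, mul_one] at hgsum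
      simpa [eq_neg_iff_add_eq_zero, add_comm] using hgsum
    rw [Fin.sum_neg_div_mul_succ, htail, neg_neg, div_self hw]
  · rw [Fin.sum_neg_div_mul_succ]
    exact div_ne_zero (neg_ne_zero.mpr (hgnd _ hI.map (Fin.map_succEmb_ne_univ I))) hw

theorem MannProperty.finite_normalizedNondegenerateSolutions {X : Set ℚ} (hX : MannProperty X)
    (hk : 1 ≤ k) {w : Fin (k + 1) → ℚ} (hw : ∀ i, w i ≠ 0) :
    (normalizedNondegenerateSolutions X w).Finite := by
  have hinj : Set.InjOn (fun g : Fin (k + 1) → ℚ => fun j : Fin k => g j.succ)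
      (normalizedNondegenerateSolutions X w) := by
    rintro g ⟨hg0, -⟩ g' ⟨hg0', -⟩ h
    funext i
    refine Fin.cases (hg0.trans hg0'.symm) (fun j => congrFun h j) i
  refine Set.Finite.of_finite_image ?_ hinj
  refine (hX k hk _ fun j => div_ne_zero (neg_ne_zero.mpr (hw j.succ)) (hw 0)).subset ?_
  rintro _ ⟨g, hg, rfl⟩
  exact tail_mem_mannSolutions (hw 0) hg

lemma div_mem_normalizedNondegenerateSolutions (M : Submonoid ℤ) {a x : Fin (k + 1) → ℤ}
    (hxM : ∀ i, x i ∈ M) (hx : ∀ i, x i ≠ 0) (hsum : ∑ i, a i * x i = 0)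
    (hnd : ∀ I : Finset (Fin (k + 1)), I.Nonempty → I ≠ univ → ∑ i ∈ I, a i * x i ≠ 0) :
    (fun i => (x i : ℚ) / x 0) ∈ normalizedNondegenerateSolutions (GSet M) (fun i => (a i : ℚ)) := by
  have hx0 : (x 0 : ℚ) ≠ 0 := Int.cast_ne_zero.mpr (hx 0)
  have hdiv : ∀ I : Finset (Fin (k + 1)),
      ∑ i ∈ I, (a i : ℚ) * (x i / x 0) = ((∑ i ∈ I, a i * x i : ℤ) : ℚ) / x 0 := fun I => by
    push_cast
    rw [sum_div]
    exact sum_congr rfl fun i _ => (mul_div_assoc _ _ _).symm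
  refine ⟨div_self hx0, fun j _ => intCast_div_mem_GSet M (hxM j) (hxM 0) (hx j) (hx 0),
    ?_, fun I hI hIu => ?_⟩
  · rw [hdiv, hsum, Int.cast_zero, zero_div]
  · rw [hdiv]
    exact div_ne_zero (Int.cast_ne_zero.mpr (hnd I hI hIu)) hx0

end Normalized

/-- let `M` be a submonoid of `(ℤ, ·, 1)` and `G` the subgroup of
`(ℚ \ {0}, ·, 1)` it generates; assume `G` has the Mann property. For `n ≥ 2`
and nonzero integers `a₁, …, a_n`, the set `S` of tuples `(1, g₂, …, g_n)` with
`gⱼ ∈ G` which are non-degenerate solutions of `a₁ + a₂ x₂ + ⋯ + a_n x_n = 0`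
is finite, and every non-degenerate solution `(x₁, …, x_n) ∈ M^n` of
`a₁ x₁ + ⋯ + a_n x_n = 0` satisfies `xⱼ = gⱼ x₁` for some `(gⱼ)ⱼ ∈ S`. -/
theorem nondegenerate_solutions_in_monoid_with_mann_property
    (M : Submonoid ℤ) (hMann : MannProperty (GSet M))
    (n : ℕ) (hn : 2 ≤ n) (a : Fin n → ℤ) (ha : ∀ i, a i ≠ 0) :
    have h0 : 0 < n := by omega
    let S : Set (Fin n → ℚ) :=
      {g : Fin n → ℚ | g ⟨0, h0⟩ = 1 ∧ (∀ j, j ≠ ⟨0, h0⟩ → g j ∈ GSet M) ∧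
        (∑ i, (a i : ℚ) * g i) = 0 ∧
        ∀ I : Finset (Fin n), I.Nonempty → I ≠ Finset.univ →
          (∑ i ∈ I, (a i : ℚ) * g i) ≠ 0}
    S.Finite ∧
      ∀ x : Fin n → ℤ, (∀ i, x i ∈ M) → (∑ i, a i * x i) = 0 →
        (∀ I : Finset (Fin n), I.Nonempty → I ≠ Finset.univ →
          (∑ i ∈ I, a i * x i) ≠ 0) →
        ∃ g ∈ S, ∀ j : Fin n, (x j : ℚ) = g j * (x ⟨0, h0⟩ : ℚ) := by
  intro h0 S
  obtain ⟨k, rfl⟩ : ∃ k, n = k + 1 := ⟨n - 1, by omega⟩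
  have hS : S = normalizedNondegenerateSolutions (GSet M) (fun i => (a i : ℚ)) := rfl
  refine ⟨hS ▸ hMann.finite_normalizedNondegenerateSolutions (by omega)
    fun i => Int.cast_ne_zero.mpr (ha i), fun x hxM hsum hnd => ?_⟩
  have : Nontrivial (Fin (k + 1)) := Fin.nontrivial_iff_two_le.mpr hn
  have hx : ∀ i, x i ≠ 0 := fun i =>
    right_ne_zero_of_mul (Finset.ne_zero_of_forall_proper_sum_ne_zero hnd i)
  have hx0 : (x 0 : ℚ) ≠ 0 := Int.cast_ne_zero.mpr (hx 0)
  exact ⟨_, hS ▸ div_mem_normalizedNondegenerateSolutions M hxM hx hsum hnd,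
    fun j => (div_mul_cancel₀ _ hx0).symm⟩
end
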